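/- arXiv:2506.00211 — 2 statements merged into one kernel-verified Lean document; each statement's English description precedes it below -/
import Mathlib

section
/- For real numbers a, b > 0, ∫₀^{2π} sin²x / (a² + b² - 2ab·cos x) dx = π/a² when a ≥ b > 0, and equals π/b² when b > a > 0. -/
open Real intervalIntegral

lemma key (a b : ℝ) (hb : 0 < b) (hab : b < a) :
    ∫ x in (0:ℝ)..(2 * π), (Real.sin x) ^ 2 / (a ^ 2 + b ^ 2 - 2 * a * b * Real.cos x) = π / a ^ 2 := by
  have ha : 0 < a := hb.trans hab
  have hB : (0:ℝ) < 2 * a * b := by positivity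
  have hk : (0:ℝ) < a ^ 2 - b ^ 2 := by nlinarith
  have hden : ∀ x : ℝ, 0 < a ^ 2 + b ^ 2 - 2 * a * b * Real.cos x := by
    intro x
    nlinarith [Real.cos_le_one x, Real.neg_one_le_cos x, sq_nonneg (a - b), sq_nonneg (a + b)]
  have hden2 : ∀ x : ℝ, 0 < (a ^ 2 + b ^ 2) + (a ^ 2 - b ^ 2) - 2 * a * b * Real.cos x := by
    intro x
    nlinarith [Real.cos_le_one x, sq_nonneg (a - b)]
  set F : ℝ → ℝ := fun x => Real.sin x / (2 * a * b) + ((a ^ 2 + b ^ 2) / (2 * a * b) ^ 2) * x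
      - ((a ^ 2 - b ^ 2) / (2 * a * b) ^ 2) * x
      - (2 * (a ^ 2 - b ^ 2) / (2 * a * b) ^ 2) *
        Real.arctan (2 * a * b * Real.sin x / ((a ^ 2 + b ^ 2) + (a ^ 2 - b ^ 2) - 2 * a * b * Real.cos x)) with hFdef
  have hderiv : ∀ x : ℝ, HasDerivAt F ((Real.sin x) ^ 2 / (a ^ 2 + b ^ 2 - 2 * a * b * Real.cos x)) x := by
    intro x
    have h1 : HasDerivAt (fun y => 2 * a * b * Real.sin y) (2 * a * b * Real.cos x) x :=
      (Real.hasDerivAt_sin x).const_mul _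
    have h2 : HasDerivAt (fun y => (a ^ 2 + b ^ 2) + (a ^ 2 - b ^ 2) - 2 * a * b * Real.cos y)
        (2 * a * b * Real.sin x) x := by
      have := ((Real.hasDerivAt_cos x).const_mul (2 * a * b)).const_sub ((a ^ 2 + b ^ 2) + (a ^ 2 - b ^ 2))
      simpa [mul_comm] using this
    have hu := h1.div h2 (hden2 x).ne'
    have harc := hu.arctan
    have hlin : HasDerivAt (fun y : ℝ => Real.sin y / (2 * a * b) + ((a ^ 2 + b ^ 2) / (2 * a * b) ^ 2) * y
        - ((a ^ 2 - b ^ 2) / (2 * a * b) ^ 2) * y)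
        (Real.cos x / (2 * a * b) + (a ^ 2 + b ^ 2) / (2 * a * b) ^ 2 - (a ^ 2 - b ^ 2) / (2 * a * b) ^ 2) x := by
      exact (((Real.hasDerivAt_sin x).div_const _).add
        (((hasDerivAt_id x).const_mul ((a ^ 2 + b ^ 2) / (2 * a * b) ^ 2)).congr_deriv (by ring))).sub
        (((hasDerivAt_id x).const_mul ((a ^ 2 - b ^ 2) / (2 * a * b) ^ 2)).congr_deriv (by ring))
    have hFd := hlin.sub (harc.const_mul (2 * (a ^ 2 - b ^ 2) / (2 * a * b) ^ 2))
    convert hFd using 1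
    · rfl
    · rfl
    · rfl
    have hsc : Real.sin x ^ 2 + Real.cos x ^ 2 = 1 := Real.sin_sq_add_cos_sq x
    have hd2 : ((a ^ 2 + b ^ 2) + (a ^ 2 - b ^ 2) - 2 * a * b * Real.cos x) ≠ 0 := (hden2 x).ne'
    have hd : (a ^ 2 + b ^ 2 - 2 * a * b * Real.cos x) ≠ 0 := (hden x).ne'
    have e0 : ((a ^ 2 + b ^ 2) + (a ^ 2 - b ^ 2) - 2 * a * b * Real.cos x) ^ 2 + (2 * a * b * Real.sin x) ^ 2
        = 4 * a ^ 2 * (a ^ 2 + b ^ 2 - 2 * a * b * Real.cos x) := by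
      linear_combination (4 * a ^ 2 * b ^ 2) * hsc
    have e1 : 1 + (2 * a * b * Real.sin x / ((a ^ 2 + b ^ 2) + (a ^ 2 - b ^ 2) - 2 * a * b * Real.cos x)) ^ 2
        = 4 * a ^ 2 * (a ^ 2 + b ^ 2 - 2 * a * b * Real.cos x)
          / ((a ^ 2 + b ^ 2) + (a ^ 2 - b ^ 2) - 2 * a * b * Real.cos x) ^ 2 := by
      rw [div_pow, ← e0, add_div, div_self (pow_ne_zero 2 hd2)]
    have e2 : 2 * a * b * Real.cos x * ((a ^ 2 + b ^ 2) + (a ^ 2 - b ^ 2) - 2 * a * b * Real.cos x)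
        - 2 * a * b * Real.sin x * (2 * a * b * Real.sin x) = 4 * a ^ 2 * b * (a * Real.cos x - b) := by
      linear_combination (-(4 * a ^ 2 * b ^ 2)) * hsc
    have e3 : ((a ^ 2 + b ^ 2) + (a ^ 2 - b ^ 2) - 2 * a * b * Real.cos x) ^ 2
          / (4 * a ^ 2 * (a ^ 2 + b ^ 2 - 2 * a * b * Real.cos x))
          * (4 * a ^ 2 * b * (a * Real.cos x - b)
            / ((a ^ 2 + b ^ 2) + (a ^ 2 - b ^ 2) - 2 * a * b * Real.cos x) ^ 2)
        = 4 * a ^ 2 * b * (a * Real.cos x - b) / (4 * a ^ 2 * (a ^ 2 + b ^ 2 - 2 * a * b * Real.cos x)) := by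
      rw [div_mul_div_comm, mul_comm (((a ^ 2 + b ^ 2) + (a ^ 2 - b ^ 2) - 2 * a * b * Real.cos x) ^ 2),
        mul_div_mul_right _ _ (pow_ne_zero 2 hd2)]
    simp only [Pi.div_apply]
    rw [e1, e2, Real.sin_sq, one_div_div, e3]
    field_simp
    rw [div_eq_iff (by intro h; apply hd; linarith), sub_div' (by intro h; apply hd; linarith), div_mul_cancel₀ _ (by intro h; apply hd; linarith)]
    ring
  have hcont : Continuous fun x => (Real.sin x) ^ 2 / (a ^ 2 + b ^ 2 - 2 * a * b * Real.cos x) := by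
    apply Continuous.div (by continuity) (by continuity)
    exact fun x => (hden x).ne'
  rw [intervalIntegral.integral_eq_sub_of_hasDerivAt (fun x _ => hderiv x) (hcont.intervalIntegrable _ _)]
  simp [hFdef, Real.sin_two_pi]
  field_simp
  ring

lemma key_eq (a : ℝ) (ha : 0 < a) :
    ∫ x in (0:ℝ)..(2 * π), (Real.sin x) ^ 2 / (a ^ 2 + a ^ 2 - 2 * a * a * Real.cos x) = π / a ^ 2 := by
  have h1 : ∫ x in (0:ℝ)..(2 * π), (Real.sin x) ^ 2 / (a ^ 2 + a ^ 2 - 2 * a * a * Real.cos x)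
      = ∫ x in (0:ℝ)..(2 * π), (1 + Real.cos x) / (2 * a ^ 2) := by
    apply intervalIntegral.integral_congr_ae
    have hnull : (MeasureTheory.volume {x : ℝ | Real.cos x = 1}) = 0 := by
      have hc : Set.Countable {x : ℝ | Real.cos x = 1} := by
        have : {x : ℝ | Real.cos x = 1} ⊆ Set.range (fun n : ℤ => (n : ℝ) * (2 * π)) := by
          intro x hx
          rcases Real.cos_eq_one_iff x |>.mp hx with ⟨n, hn⟩
          exact ⟨n, hn⟩
        exact (Set.countable_range _).mono this
      exact hc.measure_zero _
    have : ∀ᵐ x : ℝ, Real.cos x ≠ 1 := by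
      rw [MeasureTheory.ae_iff]
      simpa using hnull
    filter_upwards [this] with x hx _
    have hden : a ^ 2 + a ^ 2 - 2 * a * a * Real.cos x ≠ 0 := by
      have := Real.cos_le_one x
      intro h
      have h2 : (2 * a * a) * (1 - Real.cos x) = 0 := by linear_combination h
      rcases mul_eq_zero.mp h2 with h3 | h3
      · nlinarith
      · exact hx (by linarith)
    rw [Real.sin_sq]
    rw [div_eq_div_iff hden (by positivity)]
    ring
  rw [h1]
  have hderiv : ∀ x : ℝ, HasDerivAt (fun y : ℝ => (y + Real.sin y) / (2 * a ^ 2))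
      ((1 + Real.cos x) / (2 * a ^ 2)) x := by
    intro x
    exact ((hasDerivAt_id x).add (Real.hasDerivAt_sin x)).div_const _
  rw [intervalIntegral.integral_eq_sub_of_hasDerivAt (fun x _ => hderiv x)
    ((Continuous.div_const (by continuity) _).intervalIntegrable _ _)]
  simp [Real.sin_two_pi]
  ring

theorem stmt_0 (a b : ℝ) (hb : 0 < b) (ha : 0 < a) :
    (b ≤ a → ∫ x in (0:ℝ)..(2 * π), (Real.sin x) ^ 2 / (a ^ 2 + b ^ 2 - 2 * a * b * Real.cos x) = π / a ^ 2) ∧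
    (a < b → ∫ x in (0:ℝ)..(2 * π), (Real.sin x) ^ 2 / (a ^ 2 + b ^ 2 - 2 * a * b * Real.cos x) = π / b ^ 2) := by
  constructor
  · intro hba
    rcases eq_or_lt_of_le hba with h | h
    · subst h
      exact key_eq b hb
    · exact key a b hb h
  · intro h
    calc ∫ x in (0:ℝ)..(2 * π), (Real.sin x) ^ 2 / (a ^ 2 + b ^ 2 - 2 * a * b * Real.cos x)
        = ∫ x in (0:ℝ)..(2 * π), (Real.sin x) ^ 2 / (b ^ 2 + a ^ 2 - 2 * b * a * Real.cos x) := by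
          apply intervalIntegral.integral_congr
          intro x _
          ring_nf
      _ = π / b ^ 2 := key b a ha h
end

section
/- For positive reals γ₁ < γ₂, the quantity Φ(γ₁, γ₂) = 1/√(γ₂² - γ₁²) - (4/(π²(γ₂ + γ₁)))·K(√(2γ₁/(γ₂ + γ₁)))² is nonnegative, where K is the complete elliptic integral of the first kind. -/
/-!
Write `k² = 2γ₁/(γ₂+γ₁)`, so that `1 - k² = (γ₂-γ₁)/(γ₂+γ₁)`. Cauchy–Schwarz on `[0, π/2]` gives
`K(k)² ≤ (π/2) ∫₀^{π/2} dθ / (1 - k² sin² θ)`, and the substitution `t = tan θ` evaluates the last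
integral as `π / (2√(1-k²))`. Hence `K(k)² ≤ π² / (4√(1-k²))`, which is exactly `Φ ≥ 0`.
-/

open Real intervalIntegral

/-- The complete elliptic integral of the first kind. -/
noncomputable def ellipticK (k : ℝ) : ℝ :=
  ∫ θ in (0:ℝ)..(π / 2), 1 / Real.sqrt (1 - k ^ 2 * (Real.sin θ) ^ 2)

open Filter Topology MeasureTheory Set

theorem sq_intervalIntegral_le {f : ℝ → ℝ} {a b : ℝ} (hab : a < b)
    (hf : IntervalIntegrable f volume a b) (hf2 : IntervalIntegrable (fun x ↦ f x ^ 2) volume a b) :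
    (∫ x in a..b, f x) ^ 2 ≤ (b - a) * ∫ x in a..b, f x ^ 2 := by
  have hba : 0 < b - a := sub_pos.2 hab
  have hvol : volume.real (Ioc a b) = b - a := by simp [hab.le]
  have jensen := (Even.convexOn_pow (𝕜 := ℝ) even_two).map_set_average_le
    (continuous_pow 2).continuousOn isClosed_univ (by simp [hab]) (by simp)
    (by simp) hf.1 hf2.1
  simp only [setAverage_eq, hvol, smul_eq_mul] at jensen
  field_simp at jensen
  rwa [integral_of_le hab.le, integral_of_le hab.le]

theorem one_sub_mul_sin_sq_pos {m : ℝ} (hm : m < 1) (θ : ℝ) : 0 < 1 - m * sin θ ^ 2 := by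
  rcases le_or_gt m 0 with h | h
  · nlinarith [sq_nonneg (sin θ)]
  · nlinarith [sin_sq_le_one θ]

theorem hasDerivAt_arctan_mul_tan_div {c x : ℝ} (hc : c ≠ 0) (hx : cos x ≠ 0) :
    HasDerivAt (fun θ ↦ arctan (c * tan θ) / c) (1 / (1 - (1 - c ^ 2) * sin x ^ 2)) x := by
  refine (((hasDerivAt_tan hx).const_mul c).arctan.div_const c).congr_deriv ?_
  have hden : 1 - (1 - c ^ 2) * sin x ^ 2 = cos x ^ 2 + c ^ 2 * sin x ^ 2 := by
    linear_combination -sin_sq_add_cos_sq x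
  have hpos : 0 < cos x ^ 2 + c ^ 2 * sin x ^ 2 := by positivity
  rw [hden, tan_eq_sin_div_cos]
  field_simp

theorem integral_one_div_one_sub_mul_sin_sq {m : ℝ} (hm : m < 1) :
    ∫ θ in (0:ℝ)..(π / 2), 1 / (1 - m * sin θ ^ 2) = π / (2 * √(1 - m)) := by
  set c := √(1 - m)
  have hc : 0 < c := sqrt_pos.2 (sub_pos.2 hm)
  have hm' : m = 1 - c ^ 2 := by rw [sq_sqrt (sub_pos.2 hm).le]; ring
  have hint : IntervalIntegrable (fun θ ↦ 1 / (1 - m * sin θ ^ 2)) volume 0 (π / 2) :=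
    (continuous_const.div (by fun_prop) fun θ ↦
      (one_sub_mul_sin_sq_pos hm θ).ne').intervalIntegrable _ _
  have hderiv : ∀ x ∈ Ioo 0 (π / 2),
      HasDerivAt (fun θ ↦ arctan (c * tan θ) / c) (1 / (1 - m * sin x ^ 2)) x := fun x hx ↦ by
    rw [hm']
    exact hasDerivAt_arctan_mul_tan_div hc.ne'
      (cos_pos_of_mem_Ioo ⟨by linarith [hx.1, pi_pos], hx.2⟩).ne'
  have h0 : Tendsto (fun θ ↦ arctan (c * tan θ) / c) (𝓝[>] 0) (𝓝 0) := by
    have := (hasDerivAt_arctan_mul_tan_div hc.ne' (x := 0) (by simp)).continuousAt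
    simpa using this.tendsto.mono_left nhdsWithin_le_nhds
  have hπ2 : Tendsto (fun θ ↦ arctan (c * tan θ) / c) (𝓝[<] (π / 2)) (𝓝 (π / 2 / c)) :=
    ((tendsto_arctan_atTop.mono_right nhdsWithin_le_nhds).comp
      (tendsto_tan_pi_div_two.const_mul_atTop hc)).div_const c
  rw [integral_eq_sub_of_hasDerivAt_of_tendsto (by positivity) hderiv hint h0 hπ2, sub_zero,
    div_div]

theorem ellipticK_sq_le {k : ℝ} (hk : k ^ 2 < 1) :
    ellipticK k ^ 2 ≤ π ^ 2 / (4 * √(1 - k ^ 2)) := by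
  have hpos := one_sub_mul_sin_sq_pos hk
  have hcont : Continuous fun θ ↦ 1 / √(1 - k ^ 2 * sin θ ^ 2) :=
    continuous_const.div (by fun_prop) fun θ ↦ (sqrt_pos.2 (hpos θ)).ne'
  have hsq : ∀ θ, (1 / √(1 - k ^ 2 * sin θ ^ 2)) ^ 2 = 1 / (1 - k ^ 2 * sin θ ^ 2) := fun θ ↦ by
    rw [div_pow, one_pow, sq_sqrt (hpos θ).le]
  calc ellipticK k ^ 2
      ≤ (π / 2 - 0) * ∫ θ in (0:ℝ)..(π / 2), (1 / √(1 - k ^ 2 * sin θ ^ 2)) ^ 2 :=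
        sq_intervalIntegral_le (by positivity) (hcont.intervalIntegrable _ _)
          ((hcont.pow 2).intervalIntegrable _ _)
    _ = π ^ 2 / (4 * √(1 - k ^ 2)) := by
        simp only [hsq, integral_one_div_one_sub_mul_sin_sq hk]
        ring

theorem stmt_17 (γ₁ γ₂ : ℝ) (h0 : 0 < γ₁) (h12 : γ₁ < γ₂) :
    0 ≤ 1 / Real.sqrt (γ₂ ^ 2 - γ₁ ^ 2)
      - (4 / (π ^ 2 * (γ₂ + γ₁))) * ellipticK (Real.sqrt (2 * γ₁ / (γ₂ + γ₁))) ^ 2 := by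
  have hs : 0 < γ₂ + γ₁ := by linarith
  have hd : 0 < γ₂ - γ₁ := by linarith
  set k := √(2 * γ₁ / (γ₂ + γ₁))
  have hk2 : k ^ 2 = 2 * γ₁ / (γ₂ + γ₁) := sq_sqrt (by positivity)
  have hk1 : k ^ 2 < 1 := by rw [hk2, div_lt_one hs]; linarith
  have h1k : √(1 - k ^ 2) = √(γ₂ ^ 2 - γ₁ ^ 2) / (γ₂ + γ₁) := by
    have : 1 - k ^ 2 = (γ₂ ^ 2 - γ₁ ^ 2) / (γ₂ + γ₁) ^ 2 := by rw [hk2]; field_simp; ring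
    rw [this, sqrt_div' _ (sq_nonneg _), sqrt_sq hs.le]
  have hroot : 0 < √(γ₂ ^ 2 - γ₁ ^ 2) := sqrt_pos.2 (by nlinarith)
  have hK := ellipticK_sq_le hk1
  rw [h1k] at hK
  rw [sub_nonneg]
  calc 4 / (π ^ 2 * (γ₂ + γ₁)) * ellipticK k ^ 2
      ≤ 4 / (π ^ 2 * (γ₂ + γ₁)) * (π ^ 2 / (4 * (√(γ₂ ^ 2 - γ₁ ^ 2) / (γ₂ + γ₁)))) := by
        gcongr
    _ = 1 / √(γ₂ ^ 2 - γ₁ ^ 2) := by field_simp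
end
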